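/- Let r > 0 and ε > 0, and define f̂(t) = max{f(v) : 0 ≤ v ≤ t} and ĝ(t) = max{g(v) : 0 ≤ v ≤ t}. If f̂(r) ≤ (εr)^N and ĝ(r) ≤ (εr)^N, then for every (v₁,v₂) ∈ K with ‖(v₁,v₂)‖ = r one has ‖T_λ(v₁,v₂)‖ ≤ 2 ε λ^{1/N} ‖(v₁,v₂)‖. -/

import Mathlib

/-!
Each component of `T_λ` is bounded pointwise on `[0,1]`: the range of `vᵢ` lies in `[0, r]`,
so the nonlinearity stays below its maximum `(εr)^N` there, the inner radial integral
`∫_0^s N τ^{N-1} h(w τ) dτ` is at most `(εr)^N s^N ≤ (εr)^N`, its `N`-th root after multiplying by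
`λ` is at most `λ^{1/N} ε r`, and integrating over an interval of length at most one does not
increase this bound. Adding the two components gives `2 ε λ^{1/N} r`.
-/

open Set Filter

/-- Sup norm of a function over `[0,1]`. -/
noncomputable def supNorm (v : ℝ → ℝ) : ℝ :=
  sSup ((fun t => |v t|) '' Icc (0:ℝ) 1)

/-- Membership in the cone
`K = {(v₁,v₂) : vᵢ ≥ 0 on [0,1], min_{1/4 ≤ t ≤ 3/4} vᵢ(t) ≥ (1/4)‖vᵢ‖_∞, i = 1,2}`
(inside `C([0,1]) × C([0,1])`). -/
def InCone (v₁ v₂ : ℝ → ℝ) : Prop :=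
  ContinuousOn v₁ (Icc 0 1) ∧ ContinuousOn v₂ (Icc 0 1) ∧
  (∀ t ∈ Icc (0:ℝ) 1, 0 ≤ v₁ t) ∧ (∀ t ∈ Icc (0:ℝ) 1, 0 ≤ v₂ t) ∧
  (∀ t ∈ Icc (1/4:ℝ) (3/4), (1/4) * supNorm v₁ ≤ v₁ t) ∧
  (∀ t ∈ Icc (1/4:ℝ) (3/4), (1/4) * supNorm v₂ ≤ v₂ t)

/-- Component of the operator `T_λ`:
`(Tcomp N lam h w) r = ∫_r^1 (λ ∫_0^s N τ^{N-1} h(w(τ)) dτ)^{1/N} ds`;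
`T¹_λ(v₁,v₂) = Tcomp N lam f v₂` and `T²_λ(v₁,v₂) = Tcomp N lam g v₁`. -/
noncomputable def Tcomp (N : ℕ) (lam : ℝ) (h : ℝ → ℝ) (w : ℝ → ℝ) : ℝ → ℝ :=
  fun r => ∫ s in r..1, (lam * ∫ τ in (0:ℝ)..s, (N:ℝ) * τ ^ (N - 1) * h (w τ)) ^ ((N:ℝ)⁻¹)

/-- `Γ = (1/4) ∫_{1/4}^{3/4} (∫_{1/4}^s N τ^{N-1} dτ)^{1/N} ds`. -/
noncomputable def Gam (N : ℕ) : ℝ :=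
  (1/4) * ∫ s in (1/4 : ℝ)..(3/4), (∫ τ in (1/4:ℝ)..s, (N:ℝ) * τ ^ (N - 1)) ^ ((N:ℝ)⁻¹)

open MeasureTheory

lemma supNorm_nonneg (v : ℝ → ℝ) : 0 ≤ supNorm v :=
  Real.sSup_nonneg (by rintro _ ⟨t, -, rfl⟩; exact abs_nonneg _)

lemma abs_le_supNorm {v : ℝ → ℝ} (hv : ContinuousOn v (Icc 0 1)) {t : ℝ} (ht : t ∈ Icc (0:ℝ) 1) :
    |v t| ≤ supNorm v :=
  le_csSup (isCompact_Icc.bddAbove_image hv.abs) (mem_image_of_mem _ ht)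

lemma supNorm_le {v : ℝ → ℝ} {C : ℝ} (hC : 0 ≤ C) (hv : ∀ t ∈ Icc (0:ℝ) 1, |v t| ≤ C) :
    supNorm v ≤ C :=
  Real.sSup_le (by rintro _ ⟨t, ht, rfl⟩; exact hv t ht) hC

lemma mapsTo_Icc_of_supNorm_le {v : ℝ → ℝ} {ρ : ℝ} (hv : ContinuousOn v (Icc 0 1))
    (hnn : ∀ t ∈ Icc (0:ℝ) 1, 0 ≤ v t) (hρ : supNorm v ≤ ρ) :
    MapsTo v (Icc 0 1) (Icc 0 ρ) := fun t ht =>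
  ⟨hnn t ht, (le_abs_self _).trans ((abs_le_supNorm hv ht).trans hρ)⟩

lemma le_of_sSup_image_Icc_le {h : ℝ → ℝ} {ρ M x : ℝ} (hh : ContinuousOn h (Icc 0 ρ))
    (hM : sSup (h '' Icc 0 ρ) ≤ M) (hx : x ∈ Icc 0 ρ) : h x ≤ M :=
  (le_csSup (isCompact_Icc.bddAbove_image hh) (mem_image_of_mem _ hx)).trans hM

lemma integral_natCast_mul_pow_pred {N : ℕ} (hN : N ≠ 0) (s : ℝ) :
    ∫ τ in (0:ℝ)..s, (N:ℝ) * τ ^ (N - 1) = s ^ N := by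
  rw [intervalIntegral.integral_eq_sub_of_hasDerivAt (fun τ _ => hasDerivAt_pow N τ)
    (Continuous.intervalIntegrable (by fun_prop) _ _), zero_pow hN, sub_zero]

lemma integral_natCast_mul_pow_pred_mul_le {N : ℕ} (hN : N ≠ 0) {φ : ℝ → ℝ} {s M : ℝ}
    (hs : 0 ≤ s) (hφ : IntervalIntegrable φ volume 0 s) (hφM : ∀ τ ∈ Icc 0 s, φ τ ≤ M) :
    ∫ τ in (0:ℝ)..s, (N:ℝ) * τ ^ (N - 1) * φ τ ≤ M * s ^ N := by
  have hweight : IntervalIntegrable (fun τ : ℝ => (N:ℝ) * τ ^ (N - 1)) volume 0 s :=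
    Continuous.intervalIntegrable (by fun_prop) _ _
  calc ∫ τ in (0:ℝ)..s, (N:ℝ) * τ ^ (N - 1) * φ τ
      ≤ ∫ τ in (0:ℝ)..s, M * ((N:ℝ) * τ ^ (N - 1)) := by
        refine intervalIntegral.integral_mono_on hs
          (hφ.continuousOn_mul (by fun_prop)) (hweight.const_mul M) fun τ hτ => ?_
        have : 0 ≤ (N:ℝ) * τ ^ (N - 1) := by have := hτ.1; positivity
        nlinarith [hφM τ hτ]
    _ = M * s ^ N := by
        rw [intervalIntegral.integral_const_mul, integral_natCast_mul_pow_pred hN]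

lemma rpow_inv_natCast_mul_le {N : ℕ} (hN : N ≠ 0) {lam I a : ℝ} (hlam : 0 ≤ lam) (hI : 0 ≤ I)
    (ha : 0 ≤ a) (hIa : I ≤ a ^ N) :
    (lam * I) ^ ((N:ℝ)⁻¹) ≤ lam ^ ((N:ℝ)⁻¹) * a :=
  calc (lam * I) ^ ((N:ℝ)⁻¹) ≤ (lam * a ^ N) ^ ((N:ℝ)⁻¹) := by gcongr
    _ = lam ^ ((N:ℝ)⁻¹) * a := by
        rw [Real.mul_rpow hlam (by positivity), Real.pow_rpow_inv_natCast ha hN]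

lemma abs_intervalIntegral_le_of_mem_unitInterval {F : ℝ → ℝ} {t C : ℝ} (ht : t ∈ Icc (0:ℝ) 1)
    (hC : 0 ≤ C) (hF : ∀ s ∈ Ioc t 1, |F s| ≤ C) : |∫ s in t..1, F s| ≤ C :=
  calc |∫ s in t..1, F s| = ‖∫ s in t..1, F s‖ := rfl
    _ ≤ C * |1 - t| :=
        intervalIntegral.norm_integral_le_of_norm_le_const fun s hs =>
          hF s (by rwa [uIoc_of_le ht.2] at hs)
    _ ≤ C * 1 := by
        gcongr
        rw [abs_of_nonneg (by linarith [ht.2])]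
        linarith [ht.1]
    _ = C := mul_one C

section Tcomp

variable {N : ℕ} {lam a : ℝ} {h w : ℝ → ℝ}

lemma Tcomp_integrand_le (hN : N ≠ 0) (hlam : 0 ≤ lam) (ha : 0 ≤ a)
    (hc : ContinuousOn (h ∘ w) (Icc 0 1)) (hnn : ∀ τ ∈ Icc (0:ℝ) 1, 0 ≤ h (w τ))
    (hle : ∀ τ ∈ Icc (0:ℝ) 1, h (w τ) ≤ a ^ N) {s : ℝ} (hs : s ∈ Icc (0:ℝ) 1) :
    |(lam * ∫ τ in (0:ℝ)..s, (N:ℝ) * τ ^ (N - 1) * h (w τ)) ^ ((N:ℝ)⁻¹)| ≤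
      lam ^ ((N:ℝ)⁻¹) * a := by
  have hsub : Icc 0 s ⊆ Icc (0:ℝ) 1 := Icc_subset_Icc le_rfl hs.2
  have hint : IntervalIntegrable (fun τ => h (w τ)) volume 0 s :=
    (hc.mono hsub).intervalIntegrable_of_Icc hs.1
  have hI : 0 ≤ ∫ τ in (0:ℝ)..s, (N:ℝ) * τ ^ (N - 1) * h (w τ) :=
    intervalIntegral.integral_nonneg hs.1 fun τ hτ => by
      have := hτ.1; have := hnn τ (hsub hτ); positivity
  have hIa : ∫ τ in (0:ℝ)..s, (N:ℝ) * τ ^ (N - 1) * h (w τ) ≤ a ^ N :=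
    calc _ ≤ a ^ N * s ^ N := integral_natCast_mul_pow_pred_mul_le hN hs.1 hint
            fun τ hτ => hle τ (hsub hτ)
      _ ≤ a ^ N * 1 := by gcongr; exact pow_le_one₀ hs.1 hs.2
      _ = a ^ N := mul_one _
  rw [abs_of_nonneg (by positivity)]
  exact rpow_inv_natCast_mul_le hN hlam hI ha hIa

lemma supNorm_Tcomp_le (hN : N ≠ 0) (hlam : 0 ≤ lam) (ha : 0 ≤ a)
    (hc : ContinuousOn (h ∘ w) (Icc 0 1)) (hnn : ∀ τ ∈ Icc (0:ℝ) 1, 0 ≤ h (w τ))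
    (hle : ∀ τ ∈ Icc (0:ℝ) 1, h (w τ) ≤ a ^ N) :
    supNorm (Tcomp N lam h w) ≤ lam ^ ((N:ℝ)⁻¹) * a := by
  have hC : 0 ≤ lam ^ ((N:ℝ)⁻¹) * a := by positivity
  refine supNorm_le hC fun t ht => abs_intervalIntegral_le_of_mem_unitInterval ht hC
    fun s hs => Tcomp_integrand_le hN hlam ha hc hnn hle ⟨ht.1.trans hs.1.le, hs.2⟩

lemma supNorm_Tcomp_le_of_sSup_image_le (hN : N ≠ 0) (hlam : 0 ≤ lam) (ha : 0 ≤ a) {ρ : ℝ}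
    (hhc : ContinuousOn h (Ici 0)) (hhnn : ∀ x, 0 ≤ x → 0 ≤ h x)
    (hhat : sSup (h '' Icc 0 ρ) ≤ a ^ N) (hwc : ContinuousOn w (Icc 0 1))
    (hw : MapsTo w (Icc 0 1) (Icc 0 ρ)) :
    supNorm (Tcomp N lam h w) ≤ lam ^ ((N:ℝ)⁻¹) * a :=
  supNorm_Tcomp_le hN hlam ha (hhc.comp hwc fun _ hτ => (hw hτ).1)
    (fun _ hτ => hhnn _ (hw hτ).1)
    fun _ hτ => le_of_sSup_image_Icc_le (hhc.mono Icc_subset_Ici_self) hhat (hw hτ)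

end Tcomp

theorem operator_upper_estimate_general
    (N : ℕ) (hN : 1 ≤ N) (f g : ℝ → ℝ)
    (hfc : ContinuousOn f (Ici 0)) (hgc : ContinuousOn g (Ici 0))
    (hfnn : ∀ x, 0 ≤ x → 0 ≤ f x) (hgnn : ∀ x, 0 ≤ x → 0 ≤ g x)
    (lam : ℝ) (hlam : 0 < lam)
    (r ε : ℝ) (hε : 0 < ε)
    (hfhat : sSup (f '' Icc (0:ℝ) r) ≤ (ε * r) ^ N)
    (hghat : sSup (g '' Icc (0:ℝ) r) ≤ (ε * r) ^ N)
    (v₁ v₂ : ℝ → ℝ) (hK : InCone v₁ v₂)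
    (hnorm : supNorm v₁ + supNorm v₂ = r) :
    supNorm (Tcomp N lam f v₂) + supNorm (Tcomp N lam g v₁) ≤
      2 * ε * lam ^ ((N:ℝ)⁻¹) * (supNorm v₁ + supNorm v₂) := by
  obtain ⟨hc₁, hc₂, hnn₁, hnn₂, -, -⟩ := hK
  have h₁ := supNorm_nonneg v₁
  have h₂ := supNorm_nonneg v₂
  have hN₀ : N ≠ 0 := Nat.one_le_iff_ne_zero.mp hN
  have hεr : 0 ≤ ε * r := mul_nonneg hε.le (by linarith)
  have hT₁ := supNorm_Tcomp_le_of_sSup_image_le hN₀ hlam.le hεr hfc hfnn hfhat hc₂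
    (mapsTo_Icc_of_supNorm_le hc₂ hnn₂ (by linarith))
  have hT₂ := supNorm_Tcomp_le_of_sSup_image_le hN₀ hlam.le hεr hgc hgnn hghat hc₁
    (mapsTo_Icc_of_supNorm_le hc₁ hnn₁ (by linarith))
  rw [hnorm]
  linarith

/-- Lemma 6: with `f̂(t) = max{f(v) : 0 ≤ v ≤ t}` and `ĝ(t) = max{g(v) : 0 ≤ v ≤ t}`,
if `f̂(r) ≤ (εr)^N` and `ĝ(r) ≤ (εr)^N`, then for every `(v₁,v₂) ∈ K` with
`‖(v₁,v₂)‖ = r` one has `‖T_λ(v₁,v₂)‖ ≤ 2 ε λ^{1/N} ‖(v₁,v₂)‖`. -/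
theorem operator_upper_estimate
    (N : ℕ) (hN : 1 ≤ N) (f g : ℝ → ℝ)
    (hfc : ContinuousOn f (Ici 0)) (hgc : ContinuousOn g (Ici 0))
    (hfnn : ∀ x, 0 ≤ x → 0 ≤ f x) (hgnn : ∀ x, 0 ≤ x → 0 ≤ g x)
    (lam : ℝ) (hlam : 0 < lam)
    (r ε : ℝ) (hr : 0 < r) (hε : 0 < ε)
    (hfhat : sSup (f '' Icc (0:ℝ) r) ≤ (ε * r) ^ N)
    (hghat : sSup (g '' Icc (0:ℝ) r) ≤ (ε * r) ^ N)
    (v₁ v₂ : ℝ → ℝ) (hK : InCone v₁ v₂)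
    (hnorm : supNorm v₁ + supNorm v₂ = r) :
    supNorm (Tcomp N lam f v₂) + supNorm (Tcomp N lam g v₁) ≤
      2 * ε * lam ^ ((N:ℝ)⁻¹) * (supNorm v₁ + supNorm v₂) :=
  operator_upper_estimate_general N hN f g hfc hgc hfnn hgnn lam hlam r ε hε hfhat hghat v₁ v₂ hK
    hnorm
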